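/- g(K³_n; q) ≤ r(K³_n; 2q), where g(K³_n; q) is the least N such that every q-coloring of the triples of any N points in general position in the plane yields n points in convex position whose triples are monochromatic, and r(K³_n; 2q) is the 2q-color Ramsey number for 3-uniform hypergraphs. -/

import Mathlib

/-- A finite planar point set is in general position if no three of its points are collinear. -/
def GenPos (S : Finset (ℝ × ℝ)) : Prop :=
  ∀ T ⊆ S, T.card = 3 → ¬ Collinear ℝ (T : Set (ℝ × ℝ))

/-- A finite planar point set is in convex position if no point lies in the
convex hull of the others. -/
def ConvexPos (S : Finset (ℝ × ℝ)) : Prop :=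
  ∀ p ∈ S, p ∉ convexHull ℝ ((S.erase p : Finset (ℝ × ℝ)) : Set (ℝ × ℝ))

/-- `HyperRamseyProp ℓ n m N` : every `m`-coloring of the `ℓ`-subsets of an `N`-element
set yields an `n`-element subset all of whose `ℓ`-subsets get the same color; i.e.
`r(K^ℓ_n; m) ≤ N`. -/
def HyperRamseyProp (ℓ n m N : ℕ) : Prop :=
  ∀ χ : Finset (Fin N) → Fin m,
    ∃ T : Finset (Fin N), T.card = n ∧ ∃ c : Fin m, ∀ e ⊆ T, e.card = ℓ → χ e = c

/-- `GeomRamseyProp ℓ n q N` : every set of at least `N` points in general position in the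
plane, with any `q`-coloring of its `ℓ`-subsets, contains `n` points in convex position
all of whose `ℓ`-subsets receive the same color; i.e. `g(K^ℓ_n; q) ≤ N`. -/
def GeomRamseyProp (ℓ n q N : ℕ) : Prop :=
  ∀ V : Finset (ℝ × ℝ), N ≤ V.card → GenPos V →
    ∀ χ : Finset (ℝ × ℝ) → Fin q,
      ∃ T ⊆ V, T.card = n ∧ ConvexPos T ∧
        ∃ c : Fin q, ∀ e ⊆ T, e.card = ℓ → χ e = c


/-!
Fix an ordering of the points and colour each triple by its colour together with the orientation
of its increasing enumeration. A monochromatic `n`-set for this `2q`-colouring has all increasing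
triples oriented alike, and such a set is in convex position (Tarsi): reversing the order if
necessary, all of them are counterclockwise, and then each point is cut off from the others by
the line through its two neighbours in the order or, for the first and the last point, by the
line through the first and the last of the remaining points.
-/

open Finset

/-- Twice the signed area of the triangle `abc`; positive iff `a, b, c` turn counterclockwise. -/
def ccw (a b c : ℝ × ℝ) : ℝ :=
  (b.1 - a.1) * (c.2 - a.2) - (b.2 - a.2) * (c.1 - a.1)

section Ccw

variable (a b c : ℝ × ℝ)

theorem ccw_cycle : ccw a b c = ccw b c a := by unfold ccw; ring

theorem ccw_swap_left : ccw b a c = -ccw a b c := by unfold ccw; ring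

theorem ccw_swap_right : ccw a c b = -ccw a b c := by unfold ccw; ring

theorem ccw_reverse : ccw c b a = -ccw a b c := by unfold ccw; ring

@[simp] theorem ccw_self_fst : ccw a b a = 0 := by unfold ccw; ring

@[simp] theorem ccw_self_snd : ccw a b b = 0 := by unfold ccw; ring

theorem ccw_smul_add_smul {x y : ℝ × ℝ} {s t : ℝ} (hst : s + t = 1) :
    ccw a b (s • x + t • y) = s * ccw a b x + t * ccw a b y := by
  simp only [ccw, Prod.fst_add, Prod.snd_add, Prod.smul_fst, Prod.smul_snd, smul_eq_mul]
  linear_combination (a.2 * (b.1 - a.1) - a.1 * (b.2 - a.2)) * hst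

theorem convex_setOf_ccw_nonneg : Convex ℝ {x | 0 ≤ ccw a b x} := by
  intro x hx y hy s t hs ht hst
  simp only [Set.mem_ofPred_eq, ccw_smul_add_smul a b hst] at *
  positivity

variable {a b c}

theorem notMem_convexHull_of_ccw {s : Set (ℝ × ℝ)} (hs : ∀ x ∈ s, 0 ≤ ccw a b x)
    (hc : ccw a b c < 0) : c ∉ convexHull ℝ s :=
  fun hmem => hc.not_ge (convexHull_min hs (convex_setOf_ccw_nonneg a b) hmem)

theorem collinear_of_ccw_eq_zero (h : ccw a b c = 0) :
    Collinear ℝ ({a, b, c} : Set (ℝ × ℝ)) := by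
  obtain rfl | hab := eq_or_ne a b
  · simpa using collinear_pair ℝ a c
  have hv : (b.1 - a.1) ^ 2 + (b.2 - a.2) ^ 2 ≠ 0 := by
    intro h0
    exact hab (Prod.ext (by nlinarith) (by nlinarith))
  rw [collinear_iff_of_mem (Set.mem_insert a _)]
  refine ⟨b - a, ?_⟩
  simp only [Set.mem_insert_iff, Set.mem_singleton_iff]
  rintro p (rfl | rfl | rfl)
  · exact ⟨0, by simp⟩
  · exact ⟨1, by simp⟩
  · refine ⟨((p.1 - a.1) * (b.1 - a.1) + (p.2 - a.2) * (b.2 - a.2)) /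
      ((b.1 - a.1) ^ 2 + (b.2 - a.2) ^ 2), Prod.ext ?_ ?_⟩ <;>
    simp only [ccw, vadd_eq_add, Prod.fst_add, Prod.snd_add, Prod.smul_fst, Prod.smul_snd,
      Prod.fst_sub, Prod.snd_sub, smul_eq_mul] at h ⊢ <;>
    field_simp
    · linear_combination -(b.2 - a.2) * h
    · linear_combination (b.1 - a.1) * h

end Ccw

theorem GenPos.mono {V W : Finset (ℝ × ℝ)} (hV : GenPos V) (hWV : W ⊆ V) : GenPos W :=
  fun T hTW => hV T (hTW.trans hWV)

theorem GenPos.ccw_ne_zero {V : Finset (ℝ × ℝ)} (hV : GenPos V) {a b c : ℝ × ℝ}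
    (ha : a ∈ V) (hb : b ∈ V) (hc : c ∈ V) (hab : a ≠ b) (hac : a ≠ c) (hbc : b ≠ c) :
    ccw a b c ≠ 0 := by
  intro h
  refine hV {a, b, c} ?_ (card_eq_three.2 ⟨a, b, c, hab, hac, hbc, rfl⟩) ?_
  · simp [insert_subset_iff, ha, hb, hc]
  · simpa using collinear_of_ccw_eq_zero h

section Tarsi

variable {ι : Type*} [LinearOrder ι] {f : ι → ℝ × ℝ} {S : Finset ι}

/-- On a 3-set this records the orientation of its increasing enumeration. -/
def IsCcwOn (f : ι → ℝ × ℝ) (S : Finset ι) : Prop :=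
  ∀ ⦃i⦄, i ∈ S → ∀ ⦃j⦄, j ∈ S → ∀ ⦃k⦄, k ∈ S → i < j → j < k → 0 < ccw (f i) (f j) (f k)

theorem isCcwOn_triple_iff {i j k : ι} (hij : i < j) (hjk : j < k) :
    IsCcwOn f {i, j, k} ↔ 0 < ccw (f i) (f j) (f k) := by
  refine ⟨fun h => h (by simp) (by simp) (by simp) hij hjk, fun h a ha b hb c hc hab hbc => ?_⟩
  simp only [mem_insert, mem_singleton] at ha hb hc
  rcases ha with rfl | rfl | rfl <;> rcases hb with rfl | rfl | rfl <;>
    rcases hc with rfl | rfl | rfl <;> first | exact h | order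

theorem IsCcwOn.notMem_convexHull_image_erase_of_between (h : IsCcwOn f S) {i l k : ι}
    (hi : i ∈ S) (hl : l ∈ S) (hk : k ∈ S) (hil : i < l) (hlk : l < k) :
    f l ∉ convexHull ℝ (((S.erase l).image f : Finset (ℝ × ℝ)) : Set (ℝ × ℝ)) := by
  obtain ⟨p, hp, hp_max⟩ := (S.filter (· < l)).exists_max_image id ⟨i, mem_filter.2 ⟨hi, hil⟩⟩
  obtain ⟨s, hs, hs_min⟩ := (S.filter (l < ·)).exists_min_image id ⟨k, mem_filter.2 ⟨hk, hlk⟩⟩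
  obtain ⟨hpS, hpl⟩ := mem_filter.1 hp
  obtain ⟨hsS, hls⟩ := mem_filter.1 hs
  refine notMem_convexHull_of_ccw (a := f p) (b := f s) ?_ ?_
  · rintro _ hx
    obtain ⟨j, hj, rfl⟩ := mem_image.1 hx
    obtain ⟨hjl, hj⟩ := mem_erase.1 hj
    rcases hjl.lt_or_gt with hjl | hjl
    · rcases (hp_max j (mem_filter.2 ⟨hj, hjl⟩)).lt_or_eq with hjp | rfl
      · rw [← ccw_cycle]; exact (h hj hpS hsS hjp (hpl.trans hls)).le
      · simp
    · rcases (hs_min j (mem_filter.2 ⟨hj, hjl⟩)).lt_or_eq with hsj | rfl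
      · exact (h hpS hsS hj (hpl.trans hls) hsj).le
      · simp
  · rw [ccw_swap_right]
    exact neg_neg_of_pos (h hpS hl hsS hpl hls)

theorem IsCcwOn.notMem_convexHull_image_erase_of_outside (h : IsCcwOn f S) {i l k : ι}
    (hi : i ∈ S) (hl : l ∈ S) (hk : k ∈ S) (hik : i < k) (hlik : l < i ∨ k < l)
    (hS : ∀ j ∈ S, j ≠ l → i ≤ j ∧ j ≤ k) :
    f l ∉ convexHull ℝ (((S.erase l).image f : Finset (ℝ × ℝ)) : Set (ℝ × ℝ)) := by
  refine notMem_convexHull_of_ccw (a := f k) (b := f i) ?_ ?_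
  · rintro _ hx
    obtain ⟨j, hj, rfl⟩ := mem_image.1 hx
    obtain ⟨hjl, hj⟩ := mem_erase.1 hj
    obtain ⟨hij, hjk⟩ := hS j hj hjl
    rcases hij.lt_or_eq with hij | rfl
    · rcases hjk.lt_or_eq with hjk | rfl
      · rw [← ccw_cycle, ← ccw_cycle]; exact (h hi hj hk hij hjk).le
      · simp
    · simp
  · rw [ccw_swap_left]
    rcases hlik with hli | hkl
    · rw [← ccw_cycle]; exact neg_neg_of_pos (h hl hi hk hli hik)
    · exact neg_neg_of_pos (h hi hk hl hik hkl)

theorem IsCcwOn.convexPos_image (h : IsCcwOn f S) (hf : Function.Injective f) :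
    ConvexPos (S.image f) := by
  intro p hp
  obtain ⟨l, hl, rfl⟩ := mem_image.1 hp
  rw [← image_erase hf]
  by_cases hbetween : ∃ i ∈ S, i < l ∧ ∃ k ∈ S, l < k
  · obtain ⟨i, hi, hil, k, hk, hlk⟩ := hbetween
    exact h.notMem_convexHull_image_erase_of_between hi hl hk hil hlk
  push Not at hbetween
  rcases (S.erase l).eq_empty_or_nonempty with hO | hO
  · simp [hO]
  obtain ⟨i, hi, hi_min⟩ := (S.erase l).exists_min_image id hO
  obtain ⟨k, hk, hk_max⟩ := (S.erase l).exists_max_image id hO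
  rcases (hi_min k hk).lt_or_eq with hik | rfl
  · have hbounds : ∀ j ∈ S, j ≠ l → i ≤ j ∧ j ≤ k := fun j hj hjl =>
      ⟨hi_min j (mem_erase.2 ⟨hjl, hj⟩), hk_max j (mem_erase.2 ⟨hjl, hj⟩)⟩
    refine h.notMem_convexHull_image_erase_of_outside (mem_of_mem_erase hi) hl
      (mem_of_mem_erase hk) hik ?_ hbounds
    rcases (ne_of_mem_erase hi).lt_or_gt with hil | hli
    · exact .inr ((hbetween i (mem_of_mem_erase hi) hil k (mem_of_mem_erase hk)).lt_of_ne
        (ne_of_mem_erase hk))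
    · exact .inl hli
  · have hO : S.erase l = {i} :=
      eq_singleton_iff_unique_mem.2 ⟨hi, fun j hj => le_antisymm (hk_max j hj) (hi_min j hj)⟩
    rw [hO, image_singleton, coe_singleton, convexHull_singleton]
    exact fun hli => ne_of_mem_erase hi (hf hli).symm

theorem convexPos_image_of_ccw_neg (hf : Function.Injective f)
    (h : ∀ ⦃i⦄, i ∈ S → ∀ ⦃j⦄, j ∈ S → ∀ ⦃k⦄, k ∈ S → i < j → j < k →
      ccw (f i) (f j) (f k) < 0) :
    ConvexPos (S.image f) := by
  have hdual : IsCcwOn (f ∘ OrderDual.ofDual) (S.map OrderDual.toDual.toEmbedding) := by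
    intro i hi j hj k hk hij hjk
    simp only [mem_map_equiv, OrderDual.toDual_symm_eq] at hi hj hk
    rw [Function.comp_apply, Function.comp_apply, Function.comp_apply, ← neg_neg (ccw _ _ _),
      ← ccw_reverse]
    exact neg_pos.2 (h hk hj hi hjk hij)
  have := hdual.convexPos_image (hf.comp OrderDual.ofDual.injective)
  rwa [map_eq_image, image_image] at this

theorem convexPos_image_of_isCcwOn_triple_iff {P : Prop} (hf : Function.Injective f)
    (hgen : GenPos (S.image f)) (hS : ∀ e ⊆ S, e.card = 3 → (IsCcwOn f e ↔ P)) :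
    ConvexPos (S.image f) := by
  have horient : ∀ ⦃i⦄, i ∈ S → ∀ ⦃j⦄, j ∈ S → ∀ ⦃k⦄, k ∈ S → i < j → j < k →
      (0 < ccw (f i) (f j) (f k) ↔ P) := by
    intro i hi j hj k hk hij hjk
    rw [← isCcwOn_triple_iff hij hjk]
    exact hS _ (by simp [insert_subset_iff, hi, hj, hk])
      (card_eq_three.2 ⟨i, j, k, hij.ne, (hij.trans hjk).ne, hjk.ne, rfl⟩)
  by_cases hP : P
  · exact IsCcwOn.convexPos_image (fun _ hi _ hj _ hk hij hjk => (horient hi hj hk hij hjk).2 hP)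
      hf
  · refine convexPos_image_of_ccw_neg hf fun i hi j hj k hk hij hjk => ?_
    refine lt_of_le_of_ne (not_lt.1 fun hpos => hP ((horient hi hj hk hij hjk).1 hpos)) ?_
    exact hgen.ccw_ne_zero (mem_image_of_mem f hi) (mem_image_of_mem f hj) (mem_image_of_mem f hk)
      (hf.ne hij.ne) (hf.ne (hij.trans hjk).ne) (hf.ne hjk.ne)

end Tarsi

theorem HyperRamseyProp.exists_monochromatic_pair {ℓ n m₁ m₂ N : ℕ}
    (h : HyperRamseyProp ℓ n (m₁ * m₂) N) (χ₁ : Finset (Fin N) → Fin m₁)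
    (χ₂ : Finset (Fin N) → Fin m₂) :
    ∃ T : Finset (Fin N), T.card = n ∧
      ∃ c₁ c₂, ∀ e ⊆ T, e.card = ℓ → χ₁ e = c₁ ∧ χ₂ e = c₂ := by
  obtain ⟨T, hT, c, hc⟩ := h fun e => finProdFinEquiv (χ₁ e, χ₂ e)
  refine ⟨T, hT, (finProdFinEquiv.symm c).1, (finProdFinEquiv.symm c).2, fun e he he3 => ?_⟩
  rw [← hc e he he3, Equiv.symm_apply_apply]
  exact ⟨rfl, rfl⟩

/-- `g(K³_n; q) ≤ r(K³_n; 2q)`: any `N` realizing the `2q`-color hypergraph Ramsey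
property for triples also realizes the geometric monochromatic-convex property. -/
theorem geom_le_hyper_ramsey_triples (n q N : ℕ)
    (h : HyperRamseyProp 3 n (2 * q) N) :
    GeomRamseyProp 3 n q N := by
  intro V hNV hV χ
  let f : Fin N ↪ ℝ × ℝ :=
    (Fin.castLEEmb hNV).trans (V.equivFin.symm.toEmbedding.trans (Function.Embedding.subtype _))
  have hfV : ∀ i, f i ∈ V := fun i => (V.equivFin.symm _).2
  classical
  obtain ⟨T, hTn, b, c, hT⟩ := h.exists_monochromatic_pair
    (fun e => if IsCcwOn f e then 1 else 0 : Finset (Fin N) → Fin 2) (fun e => χ (e.image f))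
  have hTV : T.image f ⊆ V := fun _ hx => by
    obtain ⟨i, -, rfl⟩ := mem_image.1 hx
    exact hfV i
  refine ⟨T.image f, hTV, by rw [card_image_of_injective _ f.injective, hTn], ?_, c, ?_⟩
  · refine convexPos_image_of_isCcwOn_triple_iff (P := b = 1) f.injective (hV.mono hTV)
      fun e he he3 => ?_
    rw [← (hT e he he3).1]
    by_cases hccw : IsCcwOn f e <;> simp [hccw]
  · intro e he he3
    obtain ⟨e, heT, rfl⟩ := subset_image_iff.1 he
    exact (hT e heT (by rwa [card_image_of_injective _ f.injective] at he3)).2
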